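/- Let F be a field, G an abelian group, m, l ≥ 0 with m + 2l ≥ 1, c ∈ G, and let g_1, …, g_m, h_1, …, h_l, h'_1, …, h'_l ∈ G satisfy g_i² = c for all 1 ≤ i ≤ m and h_j h'_j = c for all 1 ≤ j ≤ l. Equip R = M_{m+2l}(F) with the elementary G-grading defined by the tuple (g_1, …, g_m, h_1, …, h_l, h'_1, …, h'_l). Let Φ be the block matrix with 3×3 block form [[I_m, 0, 0], [0, 0, I_l], [0, I_l, 0]] and define X^* = Φ^{-1} Xᵗ Φ. Then * is a graded involution: (R_g)^* ⊆ R_g for all g ∈ G. -/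

import Mathlib

/-!
`Φ` is the permutation matrix of the involution `σ` of the index set that fixes the first block
and swaps the last two, so `X ↦ Φ⁻¹ Xᵀ Φ` sends `E_{ij}` to `E_{σ j, σ i}`. Every index `k`
satisfies `deg k * deg (σ k) = c`, hence `(deg (σ j))⁻¹ * deg (σ i) = (deg i)⁻¹ * deg j`:
the degree of a matrix unit is preserved.
-/

open Matrix

def elementaryGrading (F : Type*) [CommRing F] {G : Type*} [Group G] {ι : Type*}
    [DecidableEq ι] (deg : ι → G) (a : G) : Submodule F (Matrix ι ι F) :=
  Submodule.span F {x | ∃ i j, (deg i)⁻¹ * deg j = a ∧ x = single i j (1 : F)}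

section Permutation

variable {ι R : Type*} [Fintype ι] [DecidableEq ι]

theorem inv_permMatrix [CommRing R] (σ : Equiv.Perm ι) :
    (σ.permMatrix R)⁻¹ = (σ.permMatrix R)ᵀ := by
  refine inv_eq_left_inv ?_
  rw [transpose_permMatrix, ← permMatrix_mul, mul_inv_cancel, permMatrix_one]

theorem transpose_permMatrix_mul_single_mul_permMatrix [NonAssocSemiring R]
    (σ : Equiv.Perm ι) (i j : ι) (r : R) :
    (σ.permMatrix R)ᵀ * single i j r * σ.permMatrix R = single (σ i) (σ j) r := by
  rw [transpose_permMatrix, PEquiv.toMatrix_toPEquiv_mul, PEquiv.mul_toMatrix_toPEquiv,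
    submatrix_submatrix]
  exact submatrix_single_equiv σ⁻¹ σ.symm i j r

end Permutation

theorem permMatrix_inv_mul_transpose_mul_mem_elementaryGrading {F : Type*} [CommRing F]
    {G : Type*} [CommGroup G] {ι : Type*} [Fintype ι] [DecidableEq ι] {deg : ι → G} {c : G}
    (σ : Equiv.Perm ι) (hσ : ∀ k, deg k * deg (σ k) = c) {a : G} {x : Matrix ι ι F}
    (hx : x ∈ elementaryGrading F deg a) :
    (σ.permMatrix F)⁻¹ * xᵀ * σ.permMatrix F ∈ elementaryGrading F deg a := by
  rw [inv_permMatrix]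
  induction hx using Submodule.span_induction with
  | mem x hx =>
    obtain ⟨i, j, rfl, rfl⟩ := hx
    refine Submodule.subset_span ⟨σ j, σ i, ?_, ?_⟩
    · rw [eq_div_of_mul_eq' (hσ i), eq_div_of_mul_eq' (hσ j), inv_mul_eq_div, inv_mul_eq_div,
        div_div_div_cancel_left]
    · rw [transpose_single, transpose_permMatrix_mul_single_mul_permMatrix]
  | zero => simp
  | add x y _ _ hx hy =>
    rw [transpose_add, Matrix.mul_add, Matrix.add_mul]
    exact add_mem hx hy
  | smul r x _ hx =>
    rw [transpose_smul, Matrix.mul_smul, Matrix.smul_mul]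
    exact Submodule.smul_mem _ r hx

theorem fromBlocks_one_zero_zero_swap_eq_permMatrix {α β R : Type*} [DecidableEq α]
    [DecidableEq β] [Zero R] [One R] :
    fromBlocks (1 : Matrix α α R) 0 0 (fromBlocks 0 1 1 0) =
      Equiv.Perm.permMatrix R (Equiv.sumCongr (Equiv.refl α) (Equiv.sumComm β β)) := by
  ext (i | i | i) (j | j | j) <;> simp [one_apply, PEquiv.toMatrix_apply]

theorem stmt12_general (F : Type*) [Field F] (G : Type*) [CommGroup G]
    (m l : ℕ) (c : G)
    (g : Fin m → G) (h h' : Fin l → G)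
    (hg : ∀ i, g i * g i = c) (hh : ∀ j, h j * h' j = c)
    (gg : Fin m ⊕ (Fin l ⊕ Fin l) → G)
    (hgg : gg = Sum.elim g (Sum.elim h h'))
    (R : G → Submodule F
      (Matrix (Fin m ⊕ (Fin l ⊕ Fin l)) (Fin m ⊕ (Fin l ⊕ Fin l)) F))
    (hR : R = fun a => Submodule.span F
      {x | ∃ i j : Fin m ⊕ (Fin l ⊕ Fin l),
        (gg i)⁻¹ * gg j = a ∧ x = Matrix.single i j (1 : F)})
    (Φ : Matrix (Fin m ⊕ (Fin l ⊕ Fin l)) (Fin m ⊕ (Fin l ⊕ Fin l)) F)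
    (hΦ : Φ = Matrix.fromBlocks 1 0 0 (Matrix.fromBlocks 0 1 1 0)) :
    ∀ a : G, ∀ x ∈ R a, Φ⁻¹ * xᵀ * Φ ∈ R a := by
  subst hgg hR hΦ
  rw [fromBlocks_one_zero_zero_swap_eq_permMatrix]
  refine fun a x hx => permMatrix_inv_mul_transpose_mul_mem_elementaryGrading (c := c) _ ?_ hx
  rintro (i | j | j)
  · exact hg i
  · exact hh j
  · exact (mul_comm _ _).trans (hh j)

/-- on `M_{m+2l}(F)` with the elementary `G`-grading defined by the tuple
`(g_1, …, g_m, h_1, …, h_l, h'_1, …, h'_l)` where `g_i² = c` and `h_j h'_j = c`,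
the transpose involution `X^* = Φ⁻¹ Xᵗ Φ` with `Φ = [[I_m,0,0],[0,0,I_l],[0,I_l,0]]`
is a graded involution: `(R_a)^* ⊆ R_a` for all `a ∈ G`. -/
theorem stmt12 (F : Type*) [Field F] (G : Type*) [CommGroup G]
    (m l : ℕ) (hml : 1 ≤ m + 2 * l) (c : G)
    (g : Fin m → G) (h h' : Fin l → G)
    (hg : ∀ i, g i * g i = c) (hh : ∀ j, h j * h' j = c)
    (gg : Fin m ⊕ (Fin l ⊕ Fin l) → G)
    (hgg : gg = Sum.elim g (Sum.elim h h'))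
    (R : G → Submodule F
      (Matrix (Fin m ⊕ (Fin l ⊕ Fin l)) (Fin m ⊕ (Fin l ⊕ Fin l)) F))
    (hR : R = fun a => Submodule.span F
      {x | ∃ i j : Fin m ⊕ (Fin l ⊕ Fin l),
        (gg i)⁻¹ * gg j = a ∧ x = Matrix.single i j (1 : F)})
    (Φ : Matrix (Fin m ⊕ (Fin l ⊕ Fin l)) (Fin m ⊕ (Fin l ⊕ Fin l)) F)
    (hΦ : Φ = Matrix.fromBlocks 1 0 0 (Matrix.fromBlocks 0 1 1 0)) :
    ∀ a : G, ∀ x ∈ R a, Φ⁻¹ * xᵀ * Φ ∈ R a :=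
  stmt12_general F G m l c g h h' hg hh gg hgg R hR Φ hΦ
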